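/- arXiv:2507.12142 — 4 statements merged into one kernel-verified Lean document; each statement's English description precedes it below -/
import Mathlib

section
/- Let m, n, r be positive integers with 2r ≤ min(m,n), let G ∈ ℝ^{m×n} have SVD blocks U_{1,r}, U_{r,2r}, Σ_{1,r}, Σ_{r,2r}, V_{1,r}, V_{r,2r}, and let α ∈ ℝ, α ≠ 0. Set ΔW = α U_{1,r} V_{r,2r}^T ∈ M_r. Then the best rank-2r approximation U_{1,r}Σ_{1,r}V_{1,r}^T + U_{r,2r}Σ_{r,2r}V_{r,2r}^T of G lies in the tangent space T_{ΔW} M_r; explicitly, with A_L = U_{1,r} and B_R = V_{r,2r}, it equals (U_{r,2r}Σ_{r,2r}) B_R^T + A_L (Σ_{1,r}V_{1,r}^T), and A_L^T (U_{r,2r}Σ_{r,2r}) = 0. -/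
open Matrix
open scoped BigOperators

noncomputable section

/-- Squared Frobenius norm `‖Y‖_F² = tr(Yᵀ Y)`. -/
def frobSq {m n : ℕ} (Y : Matrix (Fin m) (Fin n) ℝ) : ℝ := (Yᵀ * Y).trace

/-- Frobenius inner product `⟨Y, Z⟩ = tr(Yᵀ Z)`. -/
def frobInner {m n : ℕ} (Y Z : Matrix (Fin m) (Fin n) ℝ) : ℝ := (Yᵀ * Z).trace

/-- The fixed-rank manifold `M_r`: real `m×n` matrices of rank exactly `r`. -/
def Mrank (m n r : ℕ) : Set (Matrix (Fin m) (Fin n) ℝ) := {X | X.rank = r}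

/-- The tangent space of `M_r` at a point `X = A_L Bᵀ = A B_Rᵀ` (with `A_L, B_R` having
orthonormal columns): `{Ȧ B_Rᵀ + A_L Ḃᵀ : A_Lᵀ Ȧ = 0}`. -/
def tangentSet {m n r : ℕ} (AL : Matrix (Fin m) (Fin r) ℝ) (BR : Matrix (Fin n) (Fin r) ℝ) :
    Set (Matrix (Fin m) (Fin n) ℝ) :=
  {ξ | ∃ Ad : Matrix (Fin m) (Fin r) ℝ, ∃ Bd : Matrix (Fin n) (Fin r) ℝ,
    ALᵀ * Ad = 0 ∧ ξ = Ad * BRᵀ + AL * Bdᵀ}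

/-- `(A_L, B_R)` is an orthonormal-factor pair for `X`: both have orthonormal columns and
`X = A_L Bᵀ = A B_Rᵀ` for some `B`, `A`. -/
def IsONFact {m n r : ℕ} (X : Matrix (Fin m) (Fin n) ℝ)
    (AL : Matrix (Fin m) (Fin r) ℝ) (BR : Matrix (Fin n) (Fin r) ℝ) : Prop :=
  ALᵀ * AL = 1 ∧ BRᵀ * BR = 1 ∧
  (∃ B : Matrix (Fin n) (Fin r) ℝ, X = AL * Bᵀ) ∧
  (∃ A : Matrix (Fin m) (Fin r) ℝ, X = A * BRᵀ)

/-- The orthogonal projection (w.r.t. the Frobenius inner product) onto the tangent space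
determined by `(A_L, B_R)`: `P Z = Z - (I - A_L A_Lᵀ) Z (I - B_R B_Rᵀ)`. -/
def projT {m n r : ℕ} (AL : Matrix (Fin m) (Fin r) ℝ) (BR : Matrix (Fin n) (Fin r) ℝ)
    (Z : Matrix (Fin m) (Fin n) ℝ) : Matrix (Fin m) (Fin n) ℝ :=
  Z - (1 - AL * ALᵀ) * Z * (1 - BR * BRᵀ)

/-- Column block `U[:, off : off + r]` of a matrix `U`. -/
def colBlock {m k : ℕ} (U : Matrix (Fin m) (Fin k) ℝ) (off r : ℕ) (h : off + r ≤ k) :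
    Matrix (Fin m) (Fin r) ℝ :=
  fun i j => U i ⟨off + (j : ℕ), by omega⟩

/-- The rectangular diagonal matrix of singular values. -/
def svdDiag (m n : ℕ) (σ : ℕ → ℝ) : Matrix (Fin m) (Fin n) ℝ :=
  fun i j => if (i : ℕ) = (j : ℕ) then σ (i : ℕ) else 0

lemma colBlock_mul_apply {k N r : ℕ} (U : Matrix (Fin k) (Fin N) ℝ)
    (a b : ℕ) (ha : a + r ≤ N) (hb : b + r ≤ N) (i j : Fin r) :
    ((colBlock U a r ha)ᵀ * colBlock U b r hb) i j
      = (Uᵀ * U) ⟨a + (i : ℕ), by omega⟩ ⟨b + (j : ℕ), by omega⟩ := by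
  simp [colBlock, Matrix.mul_apply, Matrix.transpose_apply]

lemma colBlock_self {k N r : ℕ} (U : Matrix (Fin k) (Fin N) ℝ) (hU : Uᵀ * U = 1)
    (a : ℕ) (ha : a + r ≤ N) :
    (colBlock U a r ha)ᵀ * colBlock U a r ha = 1 := by
  ext i j
  rw [colBlock_mul_apply U a a ha ha, hU]
  by_cases h : i = j
  · subst h; simp [Matrix.one_apply]
  · rw [Matrix.one_apply_ne, Matrix.one_apply_ne h]
    simp only [ne_eq, Fin.mk.injEq]
    intro hc
    exact h (Fin.ext (by omega))

lemma colBlock_disj {k N r : ℕ} (U : Matrix (Fin k) (Fin N) ℝ) (hU : Uᵀ * U = 1)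
    (ha : 0 + r ≤ N) (hb : r + r ≤ N) :
    (colBlock U 0 r ha)ᵀ * colBlock U r r hb = 0 := by
  ext i j
  rw [colBlock_mul_apply U 0 r ha hb, hU]
  rw [Matrix.one_apply_ne]
  · rfl
  · simp only [ne_eq, Fin.mk.injEq]
    intro hc
    omega

/-- For `ΔW = α U_{1,r} V_{r,2r}ᵀ` (`α ≠ 0`), the best rank-`2r`
approximation `U_{1,r}Σ_{1,r}V_{1,r}ᵀ + U_{r,2r}Σ_{r,2r}V_{r,2r}ᵀ` of `G` lies in the
tangent space `T_{ΔW} M_r`; explicitly, with `A_L = U_{1,r}` and `B_R = V_{r,2r}`, it equals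
`(U_{r,2r}Σ_{r,2r}) B_Rᵀ + A_L (Σ_{1,r}V_{1,r}ᵀ)`, and `A_Lᵀ (U_{r,2r}Σ_{r,2r}) = 0`. -/
theorem truncated_svd_in_tangent_space
    {m n r : ℕ} (hm : 0 < m) (hn : 0 < n) (hr : 0 < r) (h2r : 2 * r ≤ min m n)
    (G : Matrix (Fin m) (Fin n) ℝ)
    (U : Matrix (Fin m) (Fin m) ℝ) (V : Matrix (Fin n) (Fin n) ℝ) (σ : ℕ → ℝ)
    (hU : Uᵀ * U = 1) (hV : Vᵀ * V = 1)
    (hσmono : ∀ i j : ℕ, i ≤ j → σ j ≤ σ i)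
    (hσnonneg : ∀ i, 0 ≤ σ i)
    (hσzero : ∀ i, min m n ≤ i → σ i = 0)
    (hG : G = U * svdDiag m n σ * Vᵀ)
    (α : ℝ) (hα : α ≠ 0)
    (ΔW : Matrix (Fin m) (Fin n) ℝ)
    (hΔW : ΔW = α • (colBlock U 0 r (by omega) * (colBlock V r r (by omega))ᵀ)) :
    ΔW ∈ Mrank m n r ∧
    IsONFact ΔW (colBlock U 0 r (by omega)) (colBlock V r r (by omega)) ∧
    (colBlock U 0 r (by omega) * diagonal (fun j : Fin r => σ (j : ℕ))
        * (colBlock V 0 r (by omega))ᵀ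
      + colBlock U r r (by omega) * diagonal (fun j : Fin r => σ (r + (j : ℕ)))
        * (colBlock V r r (by omega))ᵀ)
      ∈ tangentSet (colBlock U 0 r (by omega)) (colBlock V r r (by omega)) ∧
    (colBlock U 0 r (by omega) * diagonal (fun j : Fin r => σ (j : ℕ))
        * (colBlock V 0 r (by omega))ᵀ
      + colBlock U r r (by omega) * diagonal (fun j : Fin r => σ (r + (j : ℕ)))
        * (colBlock V r r (by omega))ᵀ)
      = (colBlock U r r (by omega) * diagonal (fun j : Fin r => σ (r + (j : ℕ))))
          * (colBlock V r r (by omega))ᵀ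
        + colBlock U 0 r (by omega)
          * (diagonal (fun j : Fin r => σ (j : ℕ)) * (colBlock V 0 r (by omega))ᵀ) ∧
    (colBlock U 0 r (by omega))ᵀ
        * (colBlock U r r (by omega) * diagonal (fun j : Fin r => σ (r + (j : ℕ)))) = 0 := by
  have hUm : r ≤ m := by omega
  have hU2m : r + r ≤ m := by omega
  have hVn : r ≤ n := by omega
  have hV2n : r + r ≤ n := by omega
  set AL := colBlock U 0 r (show 0 + r ≤ m by omega) with hALdef
  set BR := colBlock V r r (show r + r ≤ n by omega) with hBRdef
  set U2 := colBlock U r r (show r + r ≤ m by omega) with hU2def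
  set V1 := colBlock V 0 r (show 0 + r ≤ n by omega) with hV1def
  have hAL : ALᵀ * AL = 1 := colBlock_self U hU 0 _
  have hBR : BRᵀ * BR = 1 := colBlock_self V hV r _
  have hALU2 : ALᵀ * U2 = 0 := colBlock_disj U hU _ _
  have hV1BR : V1ᵀ * BR = 0 := colBlock_disj V hV _ _
  -- sandwich identity
  have hsand : ALᵀ * ΔW * BR = α • (1 : Matrix (Fin r) (Fin r) ℝ) := by
    rw [hΔW]
    rw [Matrix.mul_smul, Matrix.smul_mul]
    congr 1
    rw [← Matrix.mul_assoc ALᵀ AL BRᵀ, hAL, Matrix.one_mul, hBR]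
  have hunit : IsUnit (α • (1 : Matrix (Fin r) (Fin r) ℝ)) := by
    have h1 : (α • (1 : Matrix (Fin r) (Fin r) ℝ)) * (α⁻¹ • 1) = 1 := by
      rw [Matrix.smul_mul, Matrix.mul_smul, smul_smul, mul_inv_cancel₀ hα, Matrix.one_mul, one_smul]
    have h2 : (α⁻¹ • (1 : Matrix (Fin r) (Fin r) ℝ)) * (α • 1) = 1 := by
      rw [Matrix.smul_mul, Matrix.mul_smul, smul_smul, inv_mul_cancel₀ hα, Matrix.one_mul, one_smul]
    exact ⟨⟨_, _, h1, h2⟩, rfl⟩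
  constructor
  · -- rank
    have hle : ΔW.rank ≤ r := by
      rw [hΔW]
      calc (α • (AL * BRᵀ)).rank = ((α • AL) * BRᵀ).rank := by rw [Matrix.smul_mul]
        _ ≤ (α • AL).rank := Matrix.rank_mul_le_left _ _
        _ ≤ Fintype.card (Fin r) := Matrix.rank_le_card_width _
        _ = r := Fintype.card_fin r
    have hge : r ≤ ΔW.rank := by
      have h1 : (α • (1 : Matrix (Fin r) (Fin r) ℝ)).rank = r := by
        rw [Matrix.rank_of_isUnit _ hunit, Fintype.card_fin]
      calc r = (ALᵀ * ΔW * BR).rank := by rw [hsand, h1]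
        _ ≤ (ALᵀ * ΔW).rank := Matrix.rank_mul_le_left _ _
        _ ≤ ΔW.rank := Matrix.rank_mul_le_right _ _
    exact le_antisymm hle hge
  refine ⟨⟨hAL, hBR, ⟨α • BR, ?_⟩, ⟨α • AL, ?_⟩⟩, ?_, ?_, ?_⟩
  · rw [hΔW, Matrix.transpose_smul, Matrix.mul_smul]
  · rw [hΔW, Matrix.smul_mul]
  · refine ⟨U2 * diagonal (fun j : Fin r => σ (r + (j : ℕ))),
      (diagonal (fun j : Fin r => σ (j : ℕ)) * V1ᵀ)ᵀ, ?_, ?_⟩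
    · rw [← Matrix.mul_assoc, hALU2, Matrix.zero_mul]
    · rw [Matrix.transpose_transpose, Matrix.mul_assoc, Matrix.mul_assoc, add_comm]
  · rw [Matrix.mul_assoc, Matrix.mul_assoc, add_comm]
  · rw [← Matrix.mul_assoc, hALU2, Matrix.zero_mul]
end
end

section
/- Let m, n, r be positive integers with 2r ≤ min(m,n) and let G ∈ ℝ^{m×n} have singular values σ_1 ≥ σ_2 ≥ …. Then the minimum over all ΔW ∈ M_r of ‖G − P_{T_{ΔW} M_r} G‖_F² equals Σ_{i>2r} σ_i², and equivalently the maximum over all ΔW ∈ M_r of ‖P_{T_{ΔW} M_r} G‖_F² equals σ_1² + … + σ_{2r}². -/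
open Matrix
open scoped BigOperators

noncomputable section

/-!
The projection `P G = A_L A_Lᵀ G + (I - A_L A_Lᵀ) G B_R B_Rᵀ` factors through `2r` columns, so
its column space has an orthonormal basis `Q` with at most `2r` columns. As `P` is an orthogonal
projection, `‖P G‖² = ⟨G, P G⟩ = ⟨Qᵀ G, Qᵀ P G⟩ ≤ ‖Qᵀ G‖ ‖P G‖`, and
`‖Qᵀ G‖² = ∑ᵢ σᵢ² (Uᵀ Q Qᵀ U)ᵢᵢ ≤ σ₁² + ⋯ + σ₂ᵣ²` (Ky Fan): the diagonal weights lie in `[0, 1]`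
and sum to at most `2r`. The bound is attained by taking for `A_L` the first `r` left singular
vectors and for `B_R` the right singular vectors `r + 1, …, 2r`: the residual
`(I - A_L A_Lᵀ) G (I - B_R B_Rᵀ)` then keeps exactly `σ₂ᵣ₊₁, σ₂ᵣ₊₂, …`. The minimum of the
residual follows by Pythagoras, `‖G‖² = ‖P G‖² + ‖G - P G‖²`.
-/

section Frobenius

variable {m n : ℕ}

lemma frobInner_eq_sum (Y Z : Matrix (Fin m) (Fin n) ℝ) :
    frobInner Y Z = ∑ j, ∑ i, Y i j * Z i j := by
  simp [frobInner, Matrix.trace, Matrix.mul_apply]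

lemma frobInner_self (Y : Matrix (Fin m) (Fin n) ℝ) : frobInner Y Y = frobSq Y := rfl

lemma frobInner_comm (Y Z : Matrix (Fin m) (Fin n) ℝ) : frobInner Y Z = frobInner Z Y := by
  rw [frobInner, frobInner, ← trace_transpose, transpose_mul, transpose_transpose]

lemma frobInner_sub_right (X Y Z : Matrix (Fin m) (Fin n) ℝ) :
    frobInner X (Y - Z) = frobInner X Y - frobInner X Z := by
  simp only [frobInner, Matrix.mul_sub, trace_sub]

lemma frobSq_eq_sum (Y : Matrix (Fin m) (Fin n) ℝ) : frobSq Y = ∑ j, ∑ i, Y i j ^ 2 := by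
  simp [← frobInner_self, frobInner_eq_sum, sq]

lemma frobSq_nonneg (Y : Matrix (Fin m) (Fin n) ℝ) : 0 ≤ frobSq Y := by
  rw [frobSq_eq_sum]
  positivity

lemma frobInner_sq_le (Y Z : Matrix (Fin m) (Fin n) ℝ) :
    frobInner Y Z ^ 2 ≤ frobSq Y * frobSq Z := by
  simpa [frobInner_eq_sum, frobSq_eq_sum, Fintype.sum_prod_type] using
    Finset.sum_mul_sq_le_sq_mul_sq Finset.univ (fun p : Fin n × Fin m => Y p.2 p.1)
      (fun p => Z p.2 p.1)

lemma frobSq_sub (Y Z : Matrix (Fin m) (Fin n) ℝ) :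
    frobSq (Y - Z) = frobSq Y - 2 * frobInner Y Z + frobSq Z := by
  have hsymm := frobInner_comm Z Y
  simp only [← frobInner_self, frobInner, transpose_sub, Matrix.sub_mul, Matrix.mul_sub,
    trace_sub] at hsymm ⊢
  linarith

lemma frobSq_mul_of_orthonormal {p : ℕ} {U : Matrix (Fin p) (Fin m) ℝ} (hU : Uᵀ * U = 1)
    (X : Matrix (Fin m) (Fin n) ℝ) : frobSq (U * X) = frobSq X := by
  rw [frobSq, transpose_mul, Matrix.mul_assoc, ← Matrix.mul_assoc Uᵀ, hU, Matrix.one_mul, frobSq]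

lemma frobSq_mul_transpose_of_orthonormal {p : ℕ} {V : Matrix (Fin p) (Fin n) ℝ}
    (hV : Vᵀ * V = 1) (X : Matrix (Fin m) (Fin n) ℝ) : frobSq (X * Vᵀ) = frobSq X := by
  rw [frobSq, transpose_mul, transpose_transpose, Matrix.mul_assoc, trace_mul_comm V]
  simp only [Matrix.mul_assoc, hV, Matrix.mul_one, frobSq]

lemma frobSq_mul_mul_transpose_of_orthonormal {U : Matrix (Fin m) (Fin m) ℝ}
    {V : Matrix (Fin n) (Fin n) ℝ} (hU : Uᵀ * U = 1) (hV : Vᵀ * V = 1)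
    (X : Matrix (Fin m) (Fin n) ℝ) : frobSq (U * X * Vᵀ) = frobSq X := by
  rw [frobSq_mul_transpose_of_orthonormal hV, frobSq_mul_of_orthonormal hU]

lemma frobSq_svdDiag (σ : ℕ → ℝ) :
    frobSq (svdDiag m n σ) = ∑ i ∈ Finset.range (min m n), σ i ^ 2 := by
  have hcol (j : Fin n) :
      ∑ i : Fin m, svdDiag m n σ i j ^ 2 = if (j : ℕ) < m then σ j ^ 2 else 0 := by
    split_ifs with hj
    · rw [Finset.sum_eq_single ⟨j, hj⟩] <;> simp +contextual [svdDiag, Fin.ext_iff]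
    · exact Finset.sum_eq_zero fun i _ => by simp [svdDiag, show (i : ℕ) ≠ j by omega]
  rw [frobSq_eq_sum, Finset.sum_congr rfl fun j _ => hcol j,
    Fin.sum_univ_eq_sum_range (fun j => if j < m then σ j ^ 2 else 0), ← Finset.sum_filter]
  congr 1
  ext i
  simp [and_comm]

end Frobenius

section TangentProjection

variable {m n : ℕ}

lemma isIdempotentElem_mul_transpose {ι : Type*} [Fintype ι] [DecidableEq ι]
    {A : Matrix (Fin m) ι ℝ} (hA : Aᵀ * A = 1) : IsIdempotentElem (A * Aᵀ) := by
  rw [IsIdempotentElem, Matrix.mul_assoc, ← Matrix.mul_assoc Aᵀ, hA, Matrix.one_mul]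

lemma transpose_mul_transpose_self {ι : Type*} [Fintype ι] (A : Matrix (Fin m) ι ℝ) :
    (A * Aᵀ)ᵀ = A * Aᵀ := by
  rw [transpose_mul, transpose_transpose]

lemma transpose_one_sub_mul_transpose {ι : Type*} [Fintype ι] (A : Matrix (Fin m) ι ℝ) :
    (1 - A * Aᵀ)ᵀ = 1 - A * Aᵀ := by
  rw [transpose_sub, transpose_one, transpose_mul_transpose_self]

lemma frobInner_mul_mul_eq_frobSq {E : Matrix (Fin m) (Fin m) ℝ} {F : Matrix (Fin n) (Fin n) ℝ}
    (hEt : Eᵀ = E) (hE : IsIdempotentElem E) (hFt : Fᵀ = F) (hF : IsIdempotentElem F)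
    (G : Matrix (Fin m) (Fin n) ℝ) : frobInner G (E * G * F) = frobSq (E * G * F) := by
  simp only [frobInner, frobSq, transpose_mul, hEt, hFt, Matrix.mul_assoc]
  rw [← Matrix.mul_assoc E E, hE.eq, trace_mul_comm F]
  simp only [Matrix.mul_assoc, hF.eq]

lemma sub_projT {r : ℕ} (AL : Matrix (Fin m) (Fin r) ℝ) (BR : Matrix (Fin n) (Fin r) ℝ)
    (G : Matrix (Fin m) (Fin n) ℝ) :
    G - projT AL BR G = (1 - AL * ALᵀ) * G * (1 - BR * BRᵀ) :=
  sub_sub_cancel _ _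

lemma projT_eq_fromCols_mul_fromRows {r : ℕ} (AL : Matrix (Fin m) (Fin r) ℝ)
    (BR : Matrix (Fin n) (Fin r) ℝ) (G : Matrix (Fin m) (Fin n) ℝ) :
    projT AL BR G = fromCols AL ((1 - AL * ALᵀ) * G * BR) * fromRows (ALᵀ * G) BRᵀ := by
  rw [fromCols_mul_fromRows, projT]
  simp only [Matrix.mul_sub, Matrix.sub_mul, Matrix.mul_one, Matrix.one_mul, Matrix.mul_assoc]
  abel

variable {r : ℕ} {AL : Matrix (Fin m) (Fin r) ℝ} {BR : Matrix (Fin n) (Fin r) ℝ}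

lemma frobInner_projT (hAL : ALᵀ * AL = 1) (hBR : BRᵀ * BR = 1) (G : Matrix (Fin m) (Fin n) ℝ) :
    frobInner G (projT AL BR G) = frobSq (projT AL BR G) := by
  have hR := frobInner_mul_mul_eq_frobSq (transpose_one_sub_mul_transpose AL)
    (isIdempotentElem_mul_transpose hAL).one_sub (transpose_one_sub_mul_transpose BR)
    (isIdempotentElem_mul_transpose hBR).one_sub G
  rw [← sub_projT] at hR
  set R := G - projT AL BR G
  rw [show projT AL BR G = G - R from (sub_sub_cancel _ _).symm, frobInner_sub_right,
    frobSq_sub, frobInner_self, hR]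
  ring

lemma frobSq_projT (hAL : ALᵀ * AL = 1) (hBR : BRᵀ * BR = 1) (G : Matrix (Fin m) (Fin n) ℝ) :
    frobSq (projT AL BR G) = frobSq G - frobSq (G - projT AL BR G) := by
  rw [frobSq_sub, frobInner_projT hAL hBR]
  ring

end TangentProjection

section KyFan

variable {m n : ℕ}

lemma exists_orthonormal_cols_mul_transpose_mul_eq {ι : Type*} [Fintype ι]
    (C : Matrix (Fin m) ι ℝ) :
    ∃ d ≤ Fintype.card ι, ∃ Q : Matrix (Fin m) (Fin d) ℝ, Qᵀ * Q = 1 ∧ Q * Qᵀ * C = C := by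
  let col : ι → EuclideanSpace ℝ (Fin m) := fun j => WithLp.toLp 2 (fun i => C i j)
  let W := Submodule.span ℝ (Set.range col)
  let b := stdOrthonormalBasis ℝ W
  let Q : Matrix (Fin m) (Fin (Module.finrank ℝ W)) ℝ :=
    Matrix.of fun i t => (b t : EuclideanSpace ℝ (Fin m)) i
  refine ⟨Module.finrank ℝ W, finrank_range_le_card col, Q, ?_, ?_⟩
  · ext t t'
    have hb := orthonormal_iff_ite.mp b.orthonormal t t'
    simp only [Submodule.coe_inner, EuclideanSpace.inner_eq_star_dotProduct, dotProduct] at hb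
    rw [Matrix.mul_apply, Matrix.one_apply, ← hb]
    exact Finset.sum_congr rfl fun k _ => mul_comm _ _
  · ext i j
    have hj := congrArg (fun x : W => (x : EuclideanSpace ℝ (Fin m)) i)
      (b.sum_repr' ⟨col j, Submodule.subset_span ⟨j, rfl⟩⟩)
    simp only [Submodule.coe_inner, EuclideanSpace.inner_eq_star_dotProduct, dotProduct,
      Pi.star_apply, star_trivial, AddSubmonoidClass.coe_finsetSum, SetLike.val_smul,
      WithLp.ofLp_sum, WithLp.ofLp_smul, Finset.sum_apply, Pi.smul_apply, smul_eq_mul] at hj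
    simp only [Matrix.mul_apply, Q, transpose_apply, of_apply]
    refine Eq.trans ?_ hj
    simp only [Finset.sum_mul]
    rw [Finset.sum_comm]
    exact Finset.sum_congr rfl fun t _ => Finset.sum_congr rfl fun k _ => by simp only [col]; ring

lemma frobSq_le_frobSq_transpose_mul {d : ℕ} {Q : Matrix (Fin m) (Fin d) ℝ} (hQ : Qᵀ * Q = 1)
    {G P : Matrix (Fin m) (Fin n) ℝ} (hQP : Q * Qᵀ * P = P) (hGP : frobInner G P = frobSq P) :
    frobSq P ≤ frobSq (Qᵀ * G) := by
  have hinner : frobInner (Qᵀ * G) (Qᵀ * P) = frobInner G P := by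
    rw [frobInner, transpose_mul, transpose_transpose, Matrix.mul_assoc, ← Matrix.mul_assoc Q,
      hQP, frobInner]
  have hCS := frobInner_sq_le (Qᵀ * G) (Qᵀ * P)
  rw [hinner, hGP, ← frobSq_mul_of_orthonormal hQ (Qᵀ * P), ← Matrix.mul_assoc, hQP] at hCS
  nlinarith [frobSq_nonneg P, frobSq_nonneg (Qᵀ * G)]

/-- The bathtub principle. -/
lemma sum_mul_le_sum_range_of_antitone {M k : ℕ} (hkM : k ≤ M) {a : ℕ → ℝ} (ha : Antitone a)
    (ha0 : ∀ i, 0 ≤ a i) {c : Fin M → ℝ} (hc0 : ∀ i, 0 ≤ c i) (hc1 : ∀ i, c i ≤ 1)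
    (hc : ∑ i, c i ≤ k) : ∑ i, c i * a i ≤ ∑ i ∈ Finset.range k, a i := by
  set t := a (k - 1)
  have hpoint (i : Fin M) : c i * (a i - t) ≤ if (i : ℕ) < k then a i - t else 0 := by
    split_ifs with hi
    · have : 0 ≤ a i - t := sub_nonneg.2 (ha (by omega))
      nlinarith [hc1 i]
    · have : a i - t ≤ 0 := sub_nonpos.2 (ha (by omega))
      nlinarith [hc0 i]
  have hsum : ∑ i : Fin M, (if (i : ℕ) < k then a i - t else 0)
      = ∑ i ∈ Finset.range k, (a i - t) := by
    rw [Fin.sum_univ_eq_sum_range (fun i => if i < k then a i - t else 0), ← Finset.sum_filter]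
    congr 1
    ext i
    simp only [Finset.mem_filter, Finset.mem_range]
    omega
  have hle := Finset.sum_le_sum fun i (_ : i ∈ Finset.univ) => hpoint i
  rw [hsum] at hle
  simp only [mul_sub, Finset.sum_sub_distrib, ← Finset.sum_mul, Finset.sum_const,
    Finset.card_range, nsmul_eq_mul] at hle
  nlinarith [mul_le_mul_of_nonneg_right hc (ha0 (k - 1))]

lemma mul_transpose_diag_nonneg {ι : Type*} [Fintype ι] (W : Matrix (Fin m) ι ℝ) (i : Fin m) :
    0 ≤ (W * Wᵀ) i i :=
  Finset.sum_nonneg fun _ _ => mul_self_nonneg _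

lemma mul_transpose_diag_le_one {ι : Type*} [Fintype ι] [DecidableEq ι]
    {W : Matrix (Fin m) ι ℝ} (hW : Wᵀ * W = 1) (i : Fin m) : (W * Wᵀ) i i ≤ 1 := by
  set P := W * Wᵀ
  have hP : P * P = P := (isIdempotentElem_mul_transpose hW).eq
  have hsq : P i i = ∑ k, P i k ^ 2 := by
    conv_lhs => rw [← hP]
    rw [mul_apply]
    refine Finset.sum_congr rfl fun k _ => ?_
    rw [sq, ← transpose_apply P k i, transpose_mul_transpose_self]
  have hle : P i i ^ 2 ≤ P i i :=
    hsq ▸ Finset.single_le_sum (fun k _ => sq_nonneg (P i k)) (Finset.mem_univ i)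
  nlinarith [mul_transpose_diag_nonneg W i]

lemma svdDiag_mul_transpose {σ : ℕ → ℝ} (hσn : ∀ i, n ≤ i → σ i = 0) :
    svdDiag m n σ * (svdDiag m n σ)ᵀ = diagonal fun i : Fin m => σ i ^ 2 := by
  ext i i'
  simp only [mul_apply, svdDiag, transpose_apply, diagonal_apply]
  by_cases hin : (i : ℕ) < n
  · rw [Finset.sum_eq_single ⟨i, hin⟩]
    · by_cases h : i = i'
      · simp [sq, h]
      · simp [h, Fin.val_eq_val, Ne.symm h]
    · intro j _ hj
      have : (i : ℕ) ≠ j := fun h => hj (Fin.ext h.symm)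
      simp [this]
    · simp
  · simp [hσn i (by omega)]

variable {U : Matrix (Fin m) (Fin m) ℝ} {V : Matrix (Fin n) (Fin n) ℝ} {σ : ℕ → ℝ}

/-- Ky Fan's maximum principle. -/
lemma frobSq_transpose_mul_svd_le {d k : ℕ} (hdk : d ≤ k) (hkm : k ≤ m)
    {Q : Matrix (Fin m) (Fin d) ℝ} (hQ : Qᵀ * Q = 1) (hU : Uᵀ * U = 1) (hV : Vᵀ * V = 1)
    (hσ : Antitone σ) (hσ0 : ∀ i, 0 ≤ σ i) (hσn : ∀ i, n ≤ i → σ i = 0) :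
    frobSq (Qᵀ * (U * svdDiag m n σ * Vᵀ)) ≤ ∑ i ∈ Finset.range k, σ i ^ 2 := by
  set W := Uᵀ * Q
  have hW : Wᵀ * W = 1 := by
    rw [transpose_mul, transpose_transpose, Matrix.mul_assoc, ← Matrix.mul_assoc U,
      mul_eq_one_comm.mp hU, Matrix.one_mul, hQ]
  have hfrob : frobSq (Qᵀ * (U * svdDiag m n σ * Vᵀ)) = ∑ i, (W * Wᵀ) i i * σ i ^ 2 := by
    rw [show Qᵀ * (U * svdDiag m n σ * Vᵀ) = Wᵀ * svdDiag m n σ * Vᵀ by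
        simp only [W, transpose_mul, transpose_transpose, Matrix.mul_assoc],
      frobSq_mul_transpose_of_orthonormal hV, frobSq, transpose_mul, transpose_transpose,
      trace_mul_comm, ← Matrix.mul_assoc, Matrix.mul_assoc Wᵀ, svdDiag_mul_transpose hσn,
      trace_mul_comm, ← Matrix.mul_assoc]
    simp [Matrix.trace, mul_diagonal]
  have hmass : ∑ i, (W * Wᵀ) i i ≤ k := by
    have htrace : ∑ i, (W * Wᵀ) i i = d := by
      change (W * Wᵀ).trace = d
      rw [trace_mul_comm, hW, trace_one, Fintype.card_fin]
    rw [htrace]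
    exact_mod_cast hdk
  rw [hfrob]
  exact sum_mul_le_sum_range_of_antitone hkm (fun i j h => pow_le_pow_left₀ (hσ0 j) (hσ h) 2)
    (fun i => sq_nonneg _) (mul_transpose_diag_nonneg W) (mul_transpose_diag_le_one hW) hmass

lemma frobSq_projT_svd_le {r : ℕ} (h2r : 2 * r ≤ m) (hU : Uᵀ * U = 1) (hV : Vᵀ * V = 1)
    (hσ : Antitone σ) (hσ0 : ∀ i, 0 ≤ σ i) (hσn : ∀ i, n ≤ i → σ i = 0)
    {AL : Matrix (Fin m) (Fin r) ℝ} {BR : Matrix (Fin n) (Fin r) ℝ} (hAL : ALᵀ * AL = 1)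
    (hBR : BRᵀ * BR = 1) :
    frobSq (projT AL BR (U * svdDiag m n σ * Vᵀ)) ≤ ∑ i ∈ Finset.range (2 * r), σ i ^ 2 := by
  set G := U * svdDiag m n σ * Vᵀ
  obtain ⟨d, hd, Q, hQ, hQC⟩ :=
    exists_orthonormal_cols_mul_transpose_mul_eq (fromCols AL ((1 - AL * ALᵀ) * G * BR))
  have hQP : Q * Qᵀ * projT AL BR G = projT AL BR G := by
    rw [projT_eq_fromCols_mul_fromRows, ← Matrix.mul_assoc, hQC]
  calc _ ≤ frobSq (Qᵀ * G) := frobSq_le_frobSq_transpose_mul hQ hQP (frobInner_projT hAL hBR G)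
    _ ≤ _ := frobSq_transpose_mul_svd_le (by simpa [two_mul] using hd) h2r hQ hU hV hσ hσ0 hσn

end KyFan

section Attainment

variable {m n : ℕ}

lemma mul_colBlock {N k p off r : ℕ} (A : Matrix (Fin p) (Fin N) ℝ)
    (B : Matrix (Fin N) (Fin k) ℝ) (h : off + r ≤ k) :
    A * colBlock B off r h = colBlock (A * B) off r h :=
  rfl

lemma colBlock_eq_submatrix {N k off r : ℕ} (B : Matrix (Fin N) (Fin k) ℝ) (h : off + r ≤ k) :
    colBlock B off r h = B.submatrix id (fun j : Fin r => ⟨off + (j : ℕ), by omega⟩) :=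
  rfl

lemma colBlock_transpose_mul_self {N k off r : ℕ} {B : Matrix (Fin N) (Fin k) ℝ}
    (hB : Bᵀ * B = 1) (h : off + r ≤ k) : (colBlock B off r h)ᵀ * colBlock B off r h = 1 := by
  rw [colBlock_eq_submatrix, transpose_submatrix, ← submatrix_mul _ _ _ _ _ Function.bijective_id,
    hB, submatrix_one _ fun i j hij => by simpa [Fin.ext_iff] using hij]

lemma colBlock_one_mul_transpose {N off r : ℕ} (h : off + r ≤ N) :
    colBlock (1 : Matrix (Fin N) (Fin N) ℝ) off r h * (colBlock 1 off r h)ᵀ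
      = diagonal fun i : Fin N => (Set.Ico off (off + r)).indicator 1 (i : ℕ) := by
  ext i i'
  simp only [mul_apply, colBlock, transpose_apply, one_apply, diagonal_apply, Fin.ext_iff]
  by_cases hi : (i : ℕ) ∈ Set.Ico off (off + r)
  · rw [Set.mem_Ico] at hi
    rw [Finset.sum_eq_single ⟨i - off, by omega⟩]
    · by_cases h' : (i : ℕ) = i'
      · simp [← h', hi]
      · simp [hi, h', Ne.symm h']
    · intro j _ hj
      have : (i : ℕ) ≠ off + j := fun h'' => hj (Fin.ext (show (j : ℕ) = i - off by omega))
      simp [this]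
    · simp
  · rw [Set.mem_Ico] at hi
    refine (Finset.sum_eq_zero fun j _ => ?_).trans (by simp [hi])
    have : (i : ℕ) ≠ off + j := by omega
    simp [this]

lemma one_sub_colBlock_mul_transpose_mul {N off r : ℕ} {U : Matrix (Fin N) (Fin N) ℝ}
    (hU : Uᵀ * U = 1) (h : off + r ≤ N) :
    (1 - colBlock U off r h * (colBlock U off r h)ᵀ) * U
      = U * diagonal fun i : Fin N => 1 - (Set.Ico off (off + r)).indicator 1 (i : ℕ) := by
  set S := colBlock (1 : Matrix (Fin N) (Fin N) ℝ) off r h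
  have hUS : colBlock U off r h = U * S := by rw [mul_colBlock, Matrix.mul_one]
  calc (1 - colBlock U off r h * (colBlock U off r h)ᵀ) * U
        = U - U * (S * Sᵀ) * (Uᵀ * U) := by
          simp only [hUS, transpose_mul, Matrix.sub_mul, Matrix.one_mul, Matrix.mul_assoc]
    _ = U * (1 - S * Sᵀ) := by rw [hU, Matrix.mul_one, Matrix.mul_sub, Matrix.mul_one]
    _ = _ := by rw [colBlock_one_mul_transpose, ← diagonal_one, diagonal_sub]

lemma diagonal_mul_svdDiag_mul_diagonal (f σ g : ℕ → ℝ) :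
    diagonal (fun i : Fin m => f i) * svdDiag m n σ * diagonal (fun j : Fin n => g j)
      = svdDiag m n fun i => f i * σ i * g i := by
  ext i j
  simp only [mul_diagonal, diagonal_mul, svdDiag]
  split_ifs with hij
  · rw [hij]
  · simp

lemma sub_projT_colBlock {r : ℕ} (hrm : 0 + r ≤ m) (hrn : r + r ≤ n)
    {U : Matrix (Fin m) (Fin m) ℝ} {V : Matrix (Fin n) (Fin n) ℝ} (hU : Uᵀ * U = 1)
    (hV : Vᵀ * V = 1) (σ : ℕ → ℝ) :
    U * svdDiag m n σ * Vᵀ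
        - projT (colBlock U 0 r hrm) (colBlock V r r hrn) (U * svdDiag m n σ * Vᵀ)
      = U * svdDiag m n (fun i => if 2 * r ≤ i then σ i else 0) * Vᵀ := by
  have hL := one_sub_colBlock_mul_transpose_mul hU hrm
  have hR := congrArg transpose (one_sub_colBlock_mul_transpose_mul hV hrn)
  rw [transpose_mul, transpose_mul, transpose_one_sub_mul_transpose, diagonal_transpose] at hR
  have htrunc : (fun i => if 2 * r ≤ i then σ i else 0) = fun i =>
      (1 - (Set.Ico 0 (0 + r)).indicator 1 i) * σ i * (1 - (Set.Ico r (r + r)).indicator 1 i) := by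
    funext i
    simp only [Set.indicator_apply, Set.mem_Ico, Pi.one_apply]
    split_ifs <;> first | (exfalso; omega) | ring
  rw [sub_projT, htrunc, ← diagonal_mul_svdDiag_mul_diagonal]
  simp only [Matrix.mul_assoc]
  rw [← Matrix.mul_assoc _ U, hL, hR]
  simp only [Matrix.mul_assoc]

lemma rank_mul_transpose_of_orthonormal {p q r : ℕ} {A : Matrix (Fin p) (Fin r) ℝ}
    {B : Matrix (Fin q) (Fin r) ℝ} (hA : Aᵀ * A = 1) (hB : Bᵀ * B = 1) : (A * Bᵀ).rank = r := by
  refine le_antisymm ((rank_mul_le_left _ _).trans (rank_le_width A)) ?_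
  calc r = (1 : Matrix (Fin r) (Fin r) ℝ).rank := by rw [rank_one, Fintype.card_fin]
    _ = (Aᵀ * (A * Bᵀ * B)).rank := by rw [Matrix.mul_assoc A, hB, Matrix.mul_one, hA]
    _ ≤ (A * Bᵀ * B).rank := rank_mul_le_right _ _
    _ ≤ (A * Bᵀ).rank := rank_mul_le_left _ _

lemma isONFact_mul_transpose {p q r : ℕ} {A : Matrix (Fin p) (Fin r) ℝ}
    {B : Matrix (Fin q) (Fin r) ℝ} (hA : Aᵀ * A = 1) (hB : Bᵀ * B = 1) :
    IsONFact (A * Bᵀ) A B :=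
  ⟨hA, hB, ⟨B, rfl⟩, ⟨A, rfl⟩⟩

end Attainment

theorem tangent_projection_extremal_values_general
    {m n r : ℕ} (h2r : 2 * r ≤ min m n)
    (G : Matrix (Fin m) (Fin n) ℝ)
    (U : Matrix (Fin m) (Fin m) ℝ) (V : Matrix (Fin n) (Fin n) ℝ) (σ : ℕ → ℝ)
    (hU : Uᵀ * U = 1) (hV : Vᵀ * V = 1)
    (hσmono : ∀ i j : ℕ, i ≤ j → σ j ≤ σ i)
    (hσnonneg : ∀ i, 0 ≤ σ i)
    (hσzero : ∀ i, min m n ≤ i → σ i = 0)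
    (hG : G = U * svdDiag m n σ * Vᵀ) :
    IsLeast {v : ℝ | ∃ ΔW ∈ Mrank m n r,
        ∃ AL : Matrix (Fin m) (Fin r) ℝ, ∃ BR : Matrix (Fin n) (Fin r) ℝ,
          IsONFact ΔW AL BR ∧ v = frobSq (G - projT AL BR G)}
      (∑ i ∈ Finset.Ico (2 * r) (min m n), σ i ^ 2) ∧
    IsGreatest {v : ℝ | ∃ ΔW ∈ Mrank m n r,
        ∃ AL : Matrix (Fin m) (Fin r) ℝ, ∃ BR : Matrix (Fin n) (Fin r) ℝ,
          IsONFact ΔW AL BR ∧ v = frobSq (projT AL BR G)}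
      (∑ i ∈ Finset.range (2 * r), σ i ^ 2) := by
  have hrm : 0 + r ≤ m := by omega
  have hrn : r + r ≤ n := by omega
  have hbound {A : Matrix (Fin m) (Fin r) ℝ} {B : Matrix (Fin n) (Fin r) ℝ}
      (hA : Aᵀ * A = 1) (hB : Bᵀ * B = 1) :
      frobSq (projT A B G) ≤ ∑ i ∈ Finset.range (2 * r), σ i ^ 2 :=
    hG ▸ frobSq_projT_svd_le (by omega) hU hV hσmono hσnonneg
      (fun i hi => hσzero i (by omega)) hA hB
  have htotal : frobSq G = ∑ i ∈ Finset.range (2 * r), σ i ^ 2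
      + ∑ i ∈ Finset.Ico (2 * r) (min m n), σ i ^ 2 := by
    rw [Finset.sum_range_add_sum_Ico _ h2r, hG, frobSq_mul_mul_transpose_of_orthonormal hU hV,
      frobSq_svdDiag]
  set AL := colBlock U 0 r hrm
  set BR := colBlock V r r hrn
  have hAL : ALᵀ * AL = 1 := colBlock_transpose_mul_self hU hrm
  have hBR : BRᵀ * BR = 1 := colBlock_transpose_mul_self hV hrn
  have hresidual : frobSq (G - projT AL BR G) = ∑ i ∈ Finset.Ico (2 * r) (min m n), σ i ^ 2 := by
    rw [hG, sub_projT_colBlock hrm hrn hU hV, frobSq_mul_mul_transpose_of_orthonormal hU hV,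
      frobSq_svdDiag, ← Finset.sum_range_add_sum_Ico _ h2r, Finset.sum_eq_zero fun i hi => ?_,
      zero_add]
    · exact Finset.sum_congr rfl fun i hi => by rw [if_pos (Finset.mem_Ico.1 hi).1]
    · rw [if_neg (by simpa using hi), sq, zero_mul]
  have hW : AL * BRᵀ ∈ Mrank m n r := rank_mul_transpose_of_orthonormal hAL hBR
  have hfact := isONFact_mul_transpose hAL hBR
  refine ⟨⟨⟨_, hW, AL, BR, hfact, hresidual.symm⟩, ?_⟩, ⟨⟨_, hW, AL, BR, hfact, ?_⟩, ?_⟩⟩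
  · rintro _ ⟨-, -, A, B, ⟨hA, hB, -⟩, rfl⟩
    linarith [frobSq_projT hA hB G, hbound hA hB]
  · linarith [frobSq_projT hAL hBR G]
  · rintro _ ⟨-, -, A, B, ⟨hA, hB, -⟩, rfl⟩
    exact hbound hA hB

/-- The minimum over `ΔW ∈ M_r` of `‖G − P_{T_{ΔW}} G‖_F²` equals
`Σ_{i>2r} σᵢ²`, and equivalently the maximum over `ΔW ∈ M_r` of `‖P_{T_{ΔW}} G‖_F²` equals
`σ₁² + … + σ_{2r}²`. -/
theorem tangent_projection_extremal_values
    {m n r : ℕ} (hm : 0 < m) (hn : 0 < n) (hr : 0 < r) (h2r : 2 * r ≤ min m n)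
    (G : Matrix (Fin m) (Fin n) ℝ)
    (U : Matrix (Fin m) (Fin m) ℝ) (V : Matrix (Fin n) (Fin n) ℝ) (σ : ℕ → ℝ)
    (hU : Uᵀ * U = 1) (hV : Vᵀ * V = 1)
    (hσmono : ∀ i j : ℕ, i ≤ j → σ j ≤ σ i)
    (hσnonneg : ∀ i, 0 ≤ σ i)
    (hσzero : ∀ i, min m n ≤ i → σ i = 0)
    (hG : G = U * svdDiag m n σ * Vᵀ) :
    IsLeast {v : ℝ | ∃ ΔW ∈ Mrank m n r,
        ∃ AL : Matrix (Fin m) (Fin r) ℝ, ∃ BR : Matrix (Fin n) (Fin r) ℝ,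
          IsONFact ΔW AL BR ∧ v = frobSq (G - projT AL BR G)}
      (∑ i ∈ Finset.Ico (2 * r) (min m n), σ i ^ 2) ∧
    IsGreatest {v : ℝ | ∃ ΔW ∈ Mrank m n r,
        ∃ AL : Matrix (Fin m) (Fin r) ℝ, ∃ BR : Matrix (Fin n) (Fin r) ℝ,
          IsONFact ΔW AL BR ∧ v = frobSq (projT AL BR G)}
      (∑ i ∈ Finset.range (2 * r), σ i ^ 2) :=
  tangent_projection_extremal_values_general h2r G U V σ hU hV hσmono hσnonneg hσzero hG
end
end

section
/- Let m, n, r be positive integers with r < min(m,n) and let X ∈ M_r with X = A_L B^T = A B_R^T where A_L and B_R have orthonormal columns. Then for every Z ∈ ℝ^{m×n}, the orthogonal projection of Z onto T_X M_r (with respect to the Frobenius inner product) equals Z − (I − A_L A_L^T) Z (I − B_R B_R^T). -/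
open Matrix
open scoped BigOperators

noncomputable section

lemma frob_self_zero {m n : ℕ} (Y : Matrix (Fin m) (Fin n) ℝ)
    (h : frobInner Y Y = 0) : Y = 0 := by
  have hsum : ∑ j, ∑ i, Y i j * Y i j = 0 := by
    simpa [frobInner, Matrix.trace, Matrix.mul_apply, Matrix.diag, Matrix.transpose_apply] using h
  have h1 : ∀ j ∈ (Finset.univ : Finset (Fin n)), ∑ i, Y i j * Y i j = 0 := by
    rw [Finset.sum_eq_zero_iff_of_nonneg] at hsum
    · exact hsum
    · intro j _; exact Finset.sum_nonneg fun i _ => mul_self_nonneg _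
  ext i j
  have h2 := (Finset.sum_eq_zero_iff_of_nonneg
    (fun i _ => mul_self_nonneg (Y i j))).mp (h1 j (Finset.mem_univ j)) i (Finset.mem_univ i)
  have := mul_self_eq_zero.mp h2
  simpa using this

lemma frobInner_sub_left {m n : ℕ} (X Y ξ : Matrix (Fin m) (Fin n) ℝ) :
    frobInner (X - Y) ξ = frobInner X ξ - frobInner Y ξ := by
  simp [frobInner, Matrix.transpose_sub, Matrix.sub_mul]


/-- For every `Z`, the orthogonal projection of `Z` onto `T_X M_r`
(w.r.t. the Frobenius inner product) equals `Z − (I − A_L A_Lᵀ) Z (I − B_R B_Rᵀ)`: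
this matrix lies in `T_X M_r`, the residual is orthogonal to `T_X M_r`, and any matrix
with those two properties equals it. -/
theorem tangent_projection_closed_form
    {m n r : ℕ} (hm : 0 < m) (hn : 0 < n) (hr : 0 < r) (hrmin : r < min m n)
    (X : Matrix (Fin m) (Fin n) ℝ) (hX : X ∈ Mrank m n r)
    (AL : Matrix (Fin m) (Fin r) ℝ) (BR : Matrix (Fin n) (Fin r) ℝ)
    (hfact : IsONFact X AL BR) :
    ∀ Z : Matrix (Fin m) (Fin n) ℝ,
      (Z - (1 - AL * ALᵀ) * Z * (1 - BR * BRᵀ)) ∈ tangentSet AL BR ∧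
      (∀ ξ ∈ tangentSet AL BR,
        frobInner (Z - (Z - (1 - AL * ALᵀ) * Z * (1 - BR * BRᵀ))) ξ = 0) ∧
      (∀ P : Matrix (Fin m) (Fin n) ℝ,
        P ∈ tangentSet AL BR → (∀ ξ ∈ tangentSet AL BR, frobInner (Z - P) ξ = 0) →
        P = Z - (1 - AL * ALᵀ) * Z * (1 - BR * BRᵀ)) := by
  intro Z
  obtain ⟨hAL, hBR, _, _⟩ := hfact
  set PA : Matrix (Fin m) (Fin m) ℝ := AL * ALᵀ with hPA
  set PB : Matrix (Fin n) (Fin n) ℝ := BR * BRᵀ with hPB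
  have hmem : (Z - (1 - AL * ALᵀ) * Z * (1 - BR * BRᵀ)) ∈ tangentSet AL BR := by
    refine ⟨(1 - AL * ALᵀ) * Z * BR, Zᵀ * AL, ?_, ?_⟩
    · have : ALᵀ * ((1 - AL * ALᵀ) * Z * BR)
          = (ALᵀ - (ALᵀ * AL) * ALᵀ) * Z * BR := by
        simp [Matrix.mul_sub, Matrix.sub_mul, Matrix.mul_assoc]
      rw [this, hAL]
      simp
    · have : (Zᵀ * AL)ᵀ = ALᵀ * Z := by simp
      rw [this]
      simp only [Matrix.sub_mul, Matrix.mul_sub, Matrix.one_mul, Matrix.mul_one,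
        Matrix.mul_assoc]
      abel
  have horth : ∀ ξ ∈ tangentSet AL BR,
      frobInner (Z - (Z - (1 - AL * ALᵀ) * Z * (1 - BR * BRᵀ))) ξ = 0 := by
    rintro ξ ⟨Ad, Bd, hAd, rfl⟩
    have hW : Z - (Z - (1 - AL * ALᵀ) * Z * (1 - BR * BRᵀ))
        = (1 - AL * ALᵀ) * Z * (1 - BR * BRᵀ) := by abel
    rw [hW]
    have hWT : ((1 - AL * ALᵀ) * Z * (1 - BR * BRᵀ))ᵀ
        = (1 - BR * BRᵀ) * Zᵀ * (1 - AL * ALᵀ) := by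
      simp [Matrix.transpose_mul, Matrix.transpose_sub, Matrix.mul_assoc]
    have hterm1 : ((1 - BR * BRᵀ) * Zᵀ * (1 - AL * ALᵀ) * (Ad * BRᵀ)).trace = 0 := by
      rw [show (1 - BR * BRᵀ) * Zᵀ * (1 - AL * ALᵀ) * (Ad * BRᵀ)
          = ((1 - BR * BRᵀ) * Zᵀ * (1 - AL * ALᵀ) * Ad) * BRᵀ from
          (Matrix.mul_assoc _ _ _).symm, Matrix.trace_mul_comm]
      have h5 : BRᵀ * ((1 - BR * BRᵀ) * Zᵀ * ((1 - AL * ALᵀ) * Ad))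
          = (BRᵀ - (BRᵀ * BR) * BRᵀ) * (Zᵀ * ((1 - AL * ALᵀ) * Ad)) := by
        simp [Matrix.mul_sub, Matrix.sub_mul, Matrix.mul_assoc]
      rw [Matrix.mul_assoc, h5, hBR]
      simp
    have hterm2 : ((1 - BR * BRᵀ) * Zᵀ * (1 - AL * ALᵀ) * (AL * Bdᵀ)).trace = 0 := by
      have h0 : (1 - AL * ALᵀ) * AL = 0 := by
        simp [Matrix.sub_mul, Matrix.mul_assoc, hAL]
      have : (1 - BR * BRᵀ) * Zᵀ * (1 - AL * ALᵀ) * (AL * Bdᵀ)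
          = (1 - BR * BRᵀ) * Zᵀ * ((1 - AL * ALᵀ) * AL) * Bdᵀ := by
        simp [Matrix.mul_assoc]
      rw [this, h0]
      simp
    simp only [frobInner, hWT, Matrix.mul_add, Matrix.trace_add]
    rw [hterm1, hterm2, add_zero]
  refine ⟨hmem, horth, ?_⟩
  intro P hP hPorth
  obtain ⟨Ad1, Bd1, hAd1, hP1⟩ := hP
  obtain ⟨Ad2, Bd2, hAd2, hP2⟩ := hmem
  have hdiff : P - (Z - (1 - AL * ALᵀ) * Z * (1 - BR * BRᵀ)) ∈ tangentSet AL BR := by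
    refine ⟨Ad1 - Ad2, Bd1 - Bd2, ?_, ?_⟩
    · rw [Matrix.mul_sub, hAd1, hAd2, sub_zero]
    · rw [hP1, hP2, Matrix.transpose_sub, Matrix.sub_mul, Matrix.mul_sub]
      abel
  set D := P - (Z - (1 - AL * ALᵀ) * Z * (1 - BR * BRᵀ)) with hD
  have h1 := hPorth D hdiff
  have h2 := horth D hdiff
  have h3 : frobInner D D = 0 := by
    have : frobInner ((Z - P) - (Z - (Z - (1 - AL * ALᵀ) * Z * (1 - BR * BRᵀ)))) D = 0 := by
      rw [frobInner_sub_left, h1, h2, sub_zero]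
    have heq : (Z - P) - (Z - (Z - (1 - AL * ALᵀ) * Z * (1 - BR * BRᵀ))) = -D := by
      rw [hD]; abel
    rw [heq] at this
    have : frobInner D D = - frobInner (-D) D := by
      simp [frobInner, Matrix.transpose_neg, Matrix.neg_mul]
    rw [this]
    simp_all
  have := frob_self_zero D h3
  have h4 : P - (Z - (1 - AL * ALᵀ) * Z * (1 - BR * BRᵀ)) = 0 := by rw [← hD]; exact this
  exact sub_eq_zero.mp h4
end
end

section
/- Let m, n, r be positive integers with r < min(m,n) and let X ∈ M_r with X = A_L B^T = A B_R^T where A_L and B_R have orthonormal columns. Let k be a positive integer and let A ∈ ℝ^{m×k}, B' ∈ ℝ^{n×k} represent a matrix ξ = A (B')^T ∈ ℝ^{m×n}. Define Ȧ = (A − A_L (A_L^T A)) ((B')^T B_R) and Ḃ = B' (A^T A_L). Then A_L^T Ȧ = 0 and Ȧ B_R^T + A_L Ḃ^T equals the orthogonal projection (with respect to the Frobenius inner product) of ξ onto T_X M_r. -/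
open Matrix
open scoped BigOperators

noncomputable section

/-- Vector transport: for `ξ = A B'ᵀ` with `A ∈ ℝ^{m×k}`, `B' ∈ ℝ^{n×k}`,
setting `Ȧ = (A − A_L (A_Lᵀ A)) (B'ᵀ B_R)` and `Ḃ = B' (Aᵀ A_L)`, we get `A_Lᵀ Ȧ = 0` and
`Ȧ B_Rᵀ + A_L Ḃᵀ` is the orthogonal projection of `ξ` onto `T_X M_r`. -/
theorem vector_transport_is_projection
    {m n r k : ℕ} (hm : 0 < m) (hn : 0 < n) (hr : 0 < r) (hk : 0 < k) (hrmin : r < min m n)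
    (X : Matrix (Fin m) (Fin n) ℝ) (hX : X ∈ Mrank m n r)
    (AL : Matrix (Fin m) (Fin r) ℝ) (BR : Matrix (Fin n) (Fin r) ℝ)
    (hfact : IsONFact X AL BR)
    (A : Matrix (Fin m) (Fin k) ℝ) (B' : Matrix (Fin n) (Fin k) ℝ)
    (ξ : Matrix (Fin m) (Fin n) ℝ) (hξ : ξ = A * B'ᵀ)
    (Ad : Matrix (Fin m) (Fin r) ℝ) (Bd : Matrix (Fin n) (Fin r) ℝ)
    (hAd : Ad = (A - AL * (ALᵀ * A)) * (B'ᵀ * BR))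
    (hBd : Bd = B' * (Aᵀ * AL)) :
    ALᵀ * Ad = 0 ∧
    (Ad * BRᵀ + AL * Bdᵀ) ∈ tangentSet AL BR ∧
    ∀ ζ ∈ tangentSet AL BR, frobInner (ξ - (Ad * BRᵀ + AL * Bdᵀ)) ζ = 0 := by
  obtain ⟨hAL, hBR, -, -⟩ := hfact
  have h1 : ∀ (p : ℕ) (Y : Matrix (Fin r) (Fin p) ℝ), ALᵀ * (AL * Y) = Y := by
    intro p Y; rw [← Matrix.mul_assoc, hAL, Matrix.one_mul]
  have h2 : ∀ (p : ℕ) (Y : Matrix (Fin r) (Fin p) ℝ), BRᵀ * (BR * Y) = Y := by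
    intro p Y; rw [← Matrix.mul_assoc, hBR, Matrix.one_mul]
  have h3 : BR * (BRᵀ * BR) = BR := by rw [hBR, Matrix.mul_one]
  have hALAd : ALᵀ * Ad = 0 := by
    rw [hAd, ← Matrix.mul_assoc, Matrix.mul_sub, h1, sub_self, Matrix.zero_mul]
  refine ⟨hALAd, ⟨Ad, Bd, hALAd, rfl⟩, ?_⟩
  rintro ζ ⟨Ad', Bd', hA', rfl⟩
  set R := ξ - (Ad * BRᵀ + AL * Bdᵀ) with hR
  have hALR : ALᵀ * R = 0 := by
    rw [hR, Matrix.mul_sub, Matrix.mul_add, ← Matrix.mul_assoc, hALAd, Matrix.zero_mul,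
      ← Matrix.mul_assoc, hAL, Matrix.one_mul, hξ, hBd]
    simp [Matrix.transpose_mul, Matrix.mul_assoc]
  have hRBR : R * BR = 0 := by
    rw [hR, Matrix.sub_mul, Matrix.add_mul, hAd, hBd, hξ]
    simp only [Matrix.mul_assoc, Matrix.transpose_mul, Matrix.transpose_transpose,
      Matrix.sub_mul, h3]
    abel
  have t1 : (Rᵀ * (Ad' * BRᵀ)).trace = 0 := by
    rw [← Matrix.mul_assoc, Matrix.trace_mul_comm, ← Matrix.mul_assoc,
      ← Matrix.transpose_mul, hRBR]
    simp
  have t2 : (Rᵀ * (AL * Bd'ᵀ)).trace = 0 := by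
    have : Rᵀ * AL = 0 := by
      have := congrArg Matrix.transpose hALR
      simpa [Matrix.transpose_mul] using this
    rw [← Matrix.mul_assoc, this, Matrix.zero_mul, Matrix.trace_zero]
  simp only [frobInner, Matrix.mul_add, Matrix.trace_add, t1, t2, add_zero]
end
end
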